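/- arXiv:2501.02492 — 2 statements merged into one kernel-verified Lean document; each statement's English description precedes it below -/
import Mathlib

section
/- Assume char F ≠ 2. The three linear maps ρ_1, ρ_2, ρ_3 from the Lie algebra V^σ[G^×] = span{r g_i : r ∈ V, i ∈ I} to gl(F^8), defined by ρ_1((a,b,c,d)g_i) = δ(i)_{(a,b,c,d)}, ρ_2((a,b,c,d)g_i) = δ(i)_{((a−b−c+d)/2, (−a+b−c+d)/2, (−a−b+c+d)/2, (a+b+c+d)/2)}, and ρ_3((a,b,c,d)g_i) = δ(i)_{((a−b−c−d)/2, (−a+b−c−d)/2, (−a−b+c−d)/2, (−a−b−c+d)/2)}, are Lie algebra homomorphisms: ρ_k([x,y]) = ρ_k(x)∘ρ_k(y) − ρ_k(y)∘ρ_k(x) for all x, y ∈ V^σ[G^×] and k = 1, 2, 3. -/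
/-!
`ρ₁` is linear and the bracket is bilinear, so `ρ₁` preserves brackets as soon as it does on the
elements `r gᵢ`, `i ∈ G`; there this is the identity
`ρ₁(σ_{i,j}(r,s) g_{i*j}) = [ρ₁(r gᵢ), ρ₁(s gⱼ)]`, a finite check. The maps `T₂, T₃ : V → V`
with `ρₖ(r gᵢ) = δ(i)_{Tₖ r}` satisfy `σ_{i,j}(Tₖ r, Tₖ s) = Tₖ σ_{i,j}(r,s)` (triality), so
`x ↦ Tₖ ∘ x` is an endomorphism of the algebra `V^σ[G]` and `ρₖ = ρ₁ ∘ Tₖ` is again a Lie algebra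
homomorphism.
-/

namespace GGA

noncomputable section

variable (F : Type*) [Field F]

/-- The labelling `g_0, …, g_7` of the eight elements of `G = (ℤ/2ℤ)³`:
`g_0=(0,0,0), g_1=(1,0,0), g_2=(0,1,0), g_3=(0,0,1), g_4=(1,1,0), g_5=(0,1,1),
g_6=(1,1,1), g_7=(1,0,1)`. -/
def lab : Fin 8 → Fin 3 → ZMod 2 :=
  ![![0, 0, 0], ![1, 0, 0], ![0, 1, 0], ![0, 0, 1],
    ![1, 1, 0], ![0, 1, 1], ![1, 1, 1], ![1, 0, 1]]

/-- `star i j` is the unique index `k ∈ {0,…,7}` with `g_i + g_j = g_k`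
(the labelling `lab` is a bijection). -/
def star (i j : Fin 8) : Fin 8 := Function.invFun lab (lab i + lab j)

/-- The formula for `σ_{i,i+1}(r,s)`. -/
def f1 (r s : Fin 4 → F) : Fin 4 → F :=
  ![-(r 1 * s 0) - r 2 * s 2, -(r 1 * s 2) - r 2 * s 0,
    r 0 * s 1 + r 3 * s 3, r 0 * s 3 + r 3 * s 1]

/-- The formula for `σ_{i,i+2}(r,s)`. -/
def f2 (r s : Fin 4 → F) : Fin 4 → F :=
  ![r 1 * s 2 + r 3 * s 3, -(r 0 * s 0) - r 2 * s 1,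
    -(r 0 * s 1) - r 2 * s 0, r 1 * s 3 + r 3 * s 2]

/-- The formula for `σ_{i,i+4}(r,s)`. -/
def f4 (r s : Fin 4 → F) : Fin 4 → F :=
  ![-(r 0 * s 1) - r 1 * s 2, r 2 * s 0 + r 3 * s 3,
    -(r 0 * s 2) - r 1 * s 1, r 2 * s 3 + r 3 * s 0]

/-- The twist `σ : G × G → Bil(V × V, V)`, `V = F⁴`, written in terms of the indices:
`σ i j r s = σ_{i,j}(r,s)`.  For `i, j ∈ I = {1,…,7}` the value depends on the
difference `j - i (mod 7)`, matching the definition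
`σ_{i,i+1}, σ_{i,i+2}, σ_{i,i+4}` explicit, `σ_{0,i}=σ_{i,0}=σ_{0,0}=σ_{i,i}=0`,
`σ_{i,i+3}(r,s)=-σ_{i,i+4}(s,r)`, `σ_{i,i+5}(r,s)=-σ_{i,i+2}(s,r)`,
`σ_{i,i+6}(r,s)=-σ_{i,i+1}(s,r)`. -/
def sigma (i j : Fin 8) (r s : Fin 4 → F) : Fin 4 → F :=
  if i = 0 ∨ j = 0 ∨ i = j then 0
  else if ((j : ℕ) + 7 - (i : ℕ)) % 7 = 1 then f1 F r s
  else if ((j : ℕ) + 7 - (i : ℕ)) % 7 = 2 then f2 F r s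
  else if ((j : ℕ) + 7 - (i : ℕ)) % 7 = 3 then -f4 F s r
  else if ((j : ℕ) + 7 - (i : ℕ)) % 7 = 4 then f4 F r s
  else if ((j : ℕ) + 7 - (i : ℕ)) % 7 = 5 then -f2 F s r
  else -f1 F s r

/-- `single i r` is the formal sum `r gᵢ` in `V^σ[G]`, viewed as a function `G → V`. -/
def single (i : Fin 8) (r : Fin 4 → F) : Fin 8 → Fin 4 → F :=
  fun k => if k = i then r else 0

/-- The product of `V^σ[G]`: the unique bilinear extension of
`[r gᵢ, s gⱼ] = σ_{i,j}(r,s) g_{i*j}`. -/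
def bracket (x y : Fin 8 → Fin 4 → F) : Fin 8 → Fin 4 → F :=
  fun k => ∑ i : Fin 8, ∑ j : Fin 8, if star i j = k then sigma F i j (x i) (y j) else 0


/-- Index shifting: for `i ∈ I = {1,…,7}`, `sh i t` is the index `i+t`, taken modulo 7
so as to stay in `I`. -/
def sh (i : Fin 8) (t : ℕ) : Fin 8 := ⟨((i : ℕ) - 1 + t) % 7 + 1, by omega⟩

/-- The canonical basis vector `eₖ` of `F⁸`. -/
def e (k : Fin 8) : Fin 8 → F := Pi.single k 1

/-- The map `δ(i)_{(a,b,c,d)} : F⁸ → F⁸` given by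
`e_{i+1} ↦ a e_{i+3}, e_{i+3} ↦ −a e_{i+1}, e_{i+2} ↦ b e_{i+6}, e_{i+6} ↦ −b e_{i+2},`
`e_{i+4} ↦ c e_{i+5}, e_{i+5} ↦ −c e_{i+4}, e₀ ↦ d eᵢ, eᵢ ↦ −d e₀`. -/
def delta (i : Fin 8) (v : Fin 4 → F) (z : Fin 8 → F) : Fin 8 → F :=
  ((v 0 * z (sh i 1)) • e F (sh i 3) - (v 0 * z (sh i 3)) • e F (sh i 1))
    + ((v 1 * z (sh i 2)) • e F (sh i 6) - (v 1 * z (sh i 6)) • e F (sh i 2))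
    + ((v 2 * z (sh i 4)) • e F (sh i 5) - (v 2 * z (sh i 5)) • e F (sh i 4))
    + ((v 3 * z 0) • e F i - (v 3 * z i) • e F 0)

/-- The natural representation `ρ₁` of `V^σ[G^×]`, `ρ₁((a,b,c,d)gᵢ) = δ(i)_{(a,b,c,d)}`,
extended linearly. -/
def rho1 (x : Fin 8 → Fin 4 → F) (z : Fin 8 → F) : Fin 8 → F :=
  ∑ i : Fin 8, if i = 0 then 0 else delta F i (x i) z

/-- The half-spin representation `ρ₂` of `V^σ[G^×]`,
`ρ₂((a,b,c,d)gᵢ) = δ(i)_{((a−b−c+d)/2, (−a+b−c+d)/2, (−a−b+c+d)/2, (a+b+c+d)/2)}`. -/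
def rho2 (x : Fin 8 → Fin 4 → F) (z : Fin 8 → F) : Fin 8 → F :=
  ∑ i : Fin 8, if i = 0 then 0 else
    delta F i
      ![(x i 0 - x i 1 - x i 2 + x i 3) / 2, (-x i 0 + x i 1 - x i 2 + x i 3) / 2,
        (-x i 0 - x i 1 + x i 2 + x i 3) / 2, (x i 0 + x i 1 + x i 2 + x i 3) / 2] z

/-- The half-spin representation `ρ₃` of `V^σ[G^×]`,
`ρ₃((a,b,c,d)gᵢ) = δ(i)_{((a−b−c−d)/2, (−a+b−c−d)/2, (−a−b+c−d)/2, (−a−b−c+d)/2)}`. -/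
def rho3 (x : Fin 8 → Fin 4 → F) (z : Fin 8 → F) : Fin 8 → F :=
  ∑ i : Fin 8, if i = 0 then 0 else
    delta F i
      ![(x i 0 - x i 1 - x i 2 - x i 3) / 2, (-x i 0 + x i 1 - x i 2 - x i 3) / 2,
        (-x i 0 - x i 1 + x i 2 - x i 3) / 2, (-x i 0 - x i 1 - x i 2 + x i 3) / 2] z

/-- The subspace `V^σ[G^×]` of `V^σ[G]` spanned by `{r gᵢ : r ∈ V, i ∈ I}`. -/
def VGx : Submodule F (Fin 8 → Fin 4 → F) :=
  Submodule.span F {z : Fin 8 → Fin 4 → F | ∃ i : Fin 8, i ≠ 0 ∧ ∃ r : Fin 4 → F, z = single F i r}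

def starTable : Fin 8 → Fin 8 → Fin 8 :=
  ![![0, 1, 2, 3, 4, 5, 6, 7],
    ![1, 0, 4, 7, 2, 6, 5, 3],
    ![2, 4, 0, 5, 1, 3, 7, 6],
    ![3, 7, 5, 0, 6, 2, 4, 1],
    ![4, 2, 1, 6, 0, 7, 3, 5],
    ![5, 6, 3, 2, 7, 0, 1, 4],
    ![6, 5, 7, 4, 3, 1, 0, 2],
    ![7, 3, 6, 1, 5, 4, 2, 0]]

theorem lab_injective : Function.Injective lab := by decide

theorem star_eq_starTable (i j : Fin 8) : star i j = starTable i j := by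
  have h : lab i + lab j = lab (starTable i j) := by revert i j; decide
  rw [star, h]
  exact Function.leftInverse_invFun lab_injective _

section delta

variable (i : Fin 8) (c : F) (v w : Fin 4 → F) (z z' : Fin 8 → F)

theorem delta_add_left : delta F i (v + w) z = delta F i v z + delta F i w z := by
  simp only [delta, Pi.add_apply]; module

theorem delta_smul_left : delta F i (c • v) z = c • delta F i v z := by
  simp only [delta, Pi.smul_apply, smul_eq_mul]; module

theorem delta_add_right : delta F i v (z + z') = delta F i v z + delta F i v z' := by
  simp only [delta, Pi.add_apply]; module

theorem delta_smul_right : delta F i v (c • z) = c • delta F i v z := by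
  simp only [delta, Pi.smul_apply, smul_eq_mul]; module

end delta

def deltaLin (i : Fin 8) : (Fin 4 → F) →ₗ[F] Module.End F (Fin 8 → F) :=
  LinearMap.mk₂ F (delta F i) (delta_add_left F i) (delta_smul_left F i)
    (delta_add_right F i) (delta_smul_right F i)

def rho1Lin : (Fin 8 → Fin 4 → F) →ₗ[F] Module.End F (Fin 8 → F) :=
  ∑ i : Fin 8, (if i = 0 then 0 else deltaLin F i).comp (LinearMap.proj i)

theorem coe_rho1Lin (x : Fin 8 → Fin 4 → F) : ⇑(rho1Lin F x) = rho1 F x := by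
  funext z
  simp only [rho1Lin, deltaLin, rho1, LinearMap.coe_sum, LinearMap.coe_comp, LinearMap.coe_proj,
    Finset.sum_apply, Function.comp_apply, Function.eval, apply_ite, ite_apply,
    LinearMap.zero_apply, LinearMap.mk₂_apply]

theorem rho1Lin_single (i : Fin 8) (r : Fin 4 → F) :
    rho1Lin F (Pi.single i r) = if i = 0 then 0 else deltaLin F i r := by
  ext1 z
  simp [rho1Lin, apply_ite, ite_apply, Pi.single_apply]

theorem bracket_eq_sum_single (x y : Fin 8 → Fin 4 → F) :
    bracket F x y = ∑ i, ∑ j, Pi.single (star i j) (sigma F i j (x i) (y j)) := by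
  funext k
  simp only [bracket, eq_comm, Finset.sum_apply, Pi.single_apply]

set_option maxHeartbeats 1000000 in
theorem rho1Lin_single_star (i j : Fin 8) (r s : Fin 4 → F) :
    rho1Lin F (Pi.single (star i j) (sigma F i j r s)) =
      rho1Lin F (Pi.single i r) * rho1Lin F (Pi.single j s) -
        rho1Lin F (Pi.single j s) * rho1Lin F (Pi.single i r) := by
  refine LinearMap.ext fun z => funext fun k => ?_
  simp only [rho1Lin_single, star_eq_starTable, LinearMap.sub_apply, Module.End.mul_apply]
  fin_cases i <;> fin_cases j <;>
  simp only [deltaLin, LinearMap.mk₂_apply, LinearMap.zero_apply, Pi.zero_apply, starTable,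
    sigma, f1, f2, f4, delta, e, sh, Fin.isValue, Fin.coe_ofNat_eq_mod, Nat.reduceMod,
    Nat.add_one_sub_one, Nat.reduceAdd, Nat.mod_self, zero_add, Fin.mk_one, Nat.mod_succ,
    Fin.reduceFinMk, Fin.reduceEq, reduceIte, Nat.reduceEqDiff, Nat.reduceSub, Pi.sub_apply,
    Pi.add_apply, Pi.smul_apply, Matrix.cons_val, Pi.neg_apply, Pi.single_apply, smul_eq_mul,
    or_self, or_false, false_or, mul_zero, mul_one, sub_zero, add_zero, neg_sub] <;>
  ring

theorem rho1Lin_bracket (x y : Fin 8 → Fin 4 → F) :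
    rho1Lin F (bracket F x y) = rho1Lin F x * rho1Lin F y - rho1Lin F y * rho1Lin F x := by
  conv_rhs => rw [← Finset.univ_sum_single x, ← Finset.univ_sum_single y]
  simp only [bracket_eq_sum_single, map_sum, rho1Lin_single_star, Finset.sum_sub_distrib,
    Finset.sum_mul_sum]
  rw [Finset.sum_comm
    (f := fun i j => rho1Lin F (Pi.single j (y j)) * rho1Lin F (Pi.single i (x i)))]

def PreservesBracket (ρ : (Fin 8 → Fin 4 → F) → (Fin 8 → F) → Fin 8 → F) : Prop :=
  ∀ x y, ρ (bracket F x y) = ρ x ∘ ρ y - ρ y ∘ ρ x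

theorem preservesBracket_rho1 : PreservesBracket F (rho1 F) := by
  intro x y
  funext z
  simp only [← coe_rho1Lin, rho1Lin_bracket, LinearMap.sub_apply, Module.End.mul_apply,
    Pi.sub_apply, Function.comp_apply]

def PreservesSigma (T : (Fin 4 → F) → Fin 4 → F) : Prop :=
  ∀ i j r s, sigma F i j (T r) (T s) = T (sigma F i j r s)

theorem preservesSigma_of_f1_f2_f4 {T : (Fin 4 → F) →+ (Fin 4 → F)}
    (h1 : ∀ r s, f1 F (T r) (T s) = T (f1 F r s)) (h2 : ∀ r s, f2 F (T r) (T s) = T (f2 F r s))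
    (h4 : ∀ r s, f4 F (T r) (T s) = T (f4 F r s)) : PreservesSigma F T := by
  intro i j r s
  unfold sigma
  split_ifs <;> simp only [h1, h2, h4, map_neg, map_zero]

theorem bracket_map_of_preservesSigma {T : (Fin 4 → F) →+ (Fin 4 → F)} (hT : PreservesSigma F T)
    (x y : Fin 8 → Fin 4 → F) :
    bracket F (fun i => T (x i)) (fun j => T (y j)) = fun k => T (bracket F x y k) := by
  funext k
  simp only [bracket, map_sum, apply_ite T, map_zero, hT _ _ _ _]

theorem PreservesBracket.comp {ρ : (Fin 8 → Fin 4 → F) → (Fin 8 → F) → Fin 8 → F}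
    (hρ : PreservesBracket F ρ) {T : (Fin 4 → F) →+ (Fin 4 → F)} (hT : PreservesSigma F T) :
    PreservesBracket F fun x => ρ fun i => T (x i) := by
  intro x y
  simp only [← bracket_map_of_preservesSigma F hT]
  exact hρ _ _

def triality2 : (Fin 4 → F) →+ (Fin 4 → F) :=
  AddMonoidHom.mk' (fun v => ![(v 0 - v 1 - v 2 + v 3) / 2, (-v 0 + v 1 - v 2 + v 3) / 2,
      (-v 0 - v 1 + v 2 + v 3) / 2, (v 0 + v 1 + v 2 + v 3) / 2])
    (fun v w => by
      funext c
      fin_cases c <;> simp only [Pi.add_apply, Fin.isValue, Matrix.cons_val, Matrix.cons_val_zero,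
        Matrix.cons_val_one, Fin.zero_eta, Fin.mk_one, Fin.reduceFinMk] <;> ring)

def triality3 : (Fin 4 → F) →+ (Fin 4 → F) :=
  AddMonoidHom.mk' (fun v => ![(v 0 - v 1 - v 2 - v 3) / 2, (-v 0 + v 1 - v 2 - v 3) / 2,
      (-v 0 - v 1 + v 2 - v 3) / 2, (-v 0 - v 1 - v 2 + v 3) / 2])
    (fun v w => by
      funext c
      fin_cases c <;> simp only [Pi.add_apply, Fin.isValue, Matrix.cons_val, Matrix.cons_val_zero,
        Matrix.cons_val_one, Fin.zero_eta, Fin.mk_one, Fin.reduceFinMk] <;> ring)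

theorem rho2_eq : rho2 F = fun x => rho1 F fun i => triality2 F (x i) := rfl

theorem rho3_eq : rho3 F = fun x => rho1 F fun i => triality3 F (x i) := rfl

theorem preservesSigma_triality2 (h2 : (2 : F) ≠ 0) : PreservesSigma F (triality2 F) := by
  apply preservesSigma_of_f1_f2_f4 <;> intro r s <;> funext c <;> fin_cases c <;>
    simp only [f1, f2, f4, triality2, AddMonoidHom.mk'_apply, Fin.isValue, Matrix.cons_val,
      Matrix.cons_val_zero, Matrix.cons_val_one, Fin.zero_eta, Fin.mk_one, Fin.reduceFinMk] <;>
    field_simp <;> ring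

theorem preservesSigma_triality3 (h2 : (2 : F) ≠ 0) : PreservesSigma F (triality3 F) := by
  apply preservesSigma_of_f1_f2_f4 <;> intro r s <;> funext c <;> fin_cases c <;>
    simp only [f1, f2, f4, triality3, AddMonoidHom.mk'_apply, Fin.isValue, Matrix.cons_val,
      Matrix.cons_val_zero, Matrix.cons_val_one, Fin.zero_eta, Fin.mk_one, Fin.reduceFinMk] <;>
    field_simp <;> ring

/-- **Statement 11.** (char F ≠ 2.) `ρ₁, ρ₂, ρ₃` are Lie algebra homomorphisms from
`V^σ[G^×]` to `gl(F⁸)`. -/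
theorem rho_are_lie_homs (h2 : (2 : F) ≠ 0) :
    (∀ x ∈ VGx F, ∀ y ∈ VGx F,
      rho1 F (bracket F x y) = rho1 F x ∘ rho1 F y - rho1 F y ∘ rho1 F x) ∧
    (∀ x ∈ VGx F, ∀ y ∈ VGx F,
      rho2 F (bracket F x y) = rho2 F x ∘ rho2 F y - rho2 F y ∘ rho2 F x) ∧
    (∀ x ∈ VGx F, ∀ y ∈ VGx F,
      rho3 F (bracket F x y) = rho3 F x ∘ rho3 F y - rho3 F y ∘ rho3 F x) := by
  have hρ₁ := preservesBracket_rho1 F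
  have hρ₂ : PreservesBracket F (rho2 F) := rho2_eq F ▸ hρ₁.comp F (preservesSigma_triality2 F h2)
  have hρ₃ : PreservesBracket F (rho3 F) := rho3_eq F ▸ hρ₁.comp F (preservesSigma_triality3 F h2)
  exact ⟨fun x _ y _ => hρ₁ x y, fun x _ y _ => hρ₂ x y, fun x _ y _ => hρ₃ x y⟩

end
end GGA
end

section
/- Assume F is algebraically closed of characteristic 0. The three F^8-modules over the Lie algebra V^σ[G^×] given by the Lie algebra homomorphisms ρ_1, ρ_2, ρ_3 are irreducible (the only submodules are 0 and F^8) and pairwise non-equivalent: for k ≠ l there is no linear isomorphism T: F^8 → F^8 with T ∘ ρ_k(x) = ρ_l(x) ∘ T for all x ∈ V^σ[G^×]. -/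
/-!
Each `ρ_k` sends `r gᵢ` to `δ(i)` evaluated at an invertible linear image `twist k r` of `r`, and
`δ(i)` rotates four coordinate planes `⟨e_p, e_q⟩`. As `i` runs through `I` these `7 · 4 = 28`
planes are all the planes of `F⁸`, so `ρ_k(V^σ[G^×])` contains every `E_{pq}`, i.e. all of
`so(8)`, which acts irreducibly on `F⁸`.

For inequivalence, `ρ_k(r g₁)` is injective exactly when no coordinate of `twist k r` vanishes; an
intertwiner preserves injectivity, while `r = (1,1,1,1)` or `r = (-1,-1,-1,-3)` makes this hold
for one of `ρ_k`, `ρ_l` and fail for the other.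
-/

namespace GGA

noncomputable section

variable (F : Type*) [Field F]

/-- The family `(ρ₁, ρ₂, ρ₃)`. -/
def rhoFam : Fin 3 → (Fin 8 → Fin 4 → F) → (Fin 8 → F) → (Fin 8 → F) :=
  ![rho1 F, rho2 F, rho3 F]

section SkewElem

variable {K ι : Type*} [Field K] [DecidableEq ι]

/-- `E_{pq} = e_q e_pᵀ - e_p e_qᵀ`; these span `so(ι)`. -/
def skewElem (p q : ι) (z : ι → K) : ι → K :=
  z p • Pi.single q 1 - z q • Pi.single p 1

lemma skewElem_swap (p q : ι) : skewElem q p = -(skewElem p q : (ι → K) → ι → K) := by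
  funext z
  simp only [skewElem, Pi.neg_apply, neg_sub]

theorem eq_bot_or_eq_top_of_forall_skewElem_mem [Fintype ι] (hι : 2 < Fintype.card ι)
    (U : Submodule K (ι → K)) (hU : ∀ p q, p ≠ q → ∀ z ∈ U, skewElem p q z ∈ U) :
    U = ⊥ ∨ U = ⊤ := by
  have third : ∀ p q : ι, ∃ r, r ≠ p ∧ r ≠ q := fun p q => by
    obtain ⟨r, hr, hrq⟩ := (Finset.univ.erase p).exists_mem_ne
      (by rw [Finset.card_erase_of_mem (Finset.mem_univ p), Finset.card_univ]; omega) q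
    exact ⟨r, Finset.ne_of_mem_erase hr, hrq⟩
  have single_mem_of_ne : ∀ u ∈ U, ∀ m p, p ≠ m → u m ≠ 0 → Pi.single p 1 ∈ U := by
    intro u hu m p hpm hm
    obtain ⟨r, hrm, hrp⟩ := third m p
    have h := hU r p hrp (skewElem m r u) (hU m r hrm.symm u hu)
    have : skewElem r p (skewElem m r u) = u m • Pi.single p 1 := by
      simp [skewElem, hrm, Ne.symm hrp, hpm]
    rw [this] at h
    simpa [hm] using U.smul_mem (u m)⁻¹ h
  have single_mem : ∀ u ∈ U, ∀ m p, u m ≠ 0 → Pi.single p 1 ∈ U := by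
    intro u hu m p hm
    obtain ⟨r, hrm, hrp⟩ := third m p
    exact single_mem_of_ne _ (single_mem_of_ne u hu m r hrm hm) r p (Ne.symm hrp) (by simp)
  by_cases hbot : U = ⊥
  · exact Or.inl hbot
  obtain ⟨u, hu, hu0⟩ := (Submodule.ne_bot_iff U).mp hbot
  obtain ⟨m, hm⟩ := Function.ne_iff.mp hu0
  refine Or.inr (Submodule.eq_top_iff'.mpr fun z => ?_)
  rw [← Finset.univ_sum_single z]
  refine Submodule.sum_mem _ fun p _ => ?_
  simpa [← Pi.single_smul', smul_eq_mul] using U.smul_mem (z p) (single_mem u hu m p hm)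

end SkewElem

lemma _root_.Function.Semiconj.injective_iff {α β : Type*} {ga : α → α} {gb : β → β} (f : α ≃ β)
    (h : Function.Semiconj f ga gb) : Function.Injective ga ↔ Function.Injective gb := by
  refine ⟨fun hga x y hxy => ?_, fun hgb x y hxy => f.injective (hgb ?_)⟩
  · rw [← f.apply_symm_apply x, ← f.apply_symm_apply y, ← h, ← h] at hxy
    simpa using hga (f.injective hxy)
  · rw [← h, ← h, hxy]

variable {F}

lemma single_mem_VGx {i : Fin 8} (hi : i ≠ 0) (r : Fin 4 → F) : single F i r ∈ VGx F :=
  Submodule.subset_span ⟨i, hi, r, rfl⟩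

section Delta

/-- `δ(i)` acts on the four coordinate planes `⟨e_{blockFst i m}, e_{blockSnd i m}⟩`, `m < 4`. -/
def blockFst (i : Fin 8) : Fin 4 → Fin 8 := ![sh i 1, sh i 2, sh i 4, 0]

def blockSnd (i : Fin 8) : Fin 4 → Fin 8 := ![sh i 3, sh i 6, sh i 5, i]

lemma exists_blockFst_eq_or_blockSnd_eq {i : Fin 8} (hi : i ≠ 0) (p : Fin 8) :
    ∃ m, blockFst i m = p ∨ blockSnd i m = p := by
  revert i p; decide

lemma exists_block_eq_of_ne {p q : Fin 8} (hpq : p ≠ q) :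
    ∃ i ≠ 0, ∃ m,
      (blockFst i m = p ∧ blockSnd i m = q) ∨ (blockFst i m = q ∧ blockSnd i m = p) := by
  revert p q; decide

lemma delta_single (i : Fin 8) (m : Fin 4) (c : F) :
    delta F i (Pi.single m c) = c • skewElem (blockFst i m) (blockSnd i m) := by
  funext z
  fin_cases m <;> simp [delta, blockFst, blockSnd, skewElem, e, smul_sub, smul_smul]

variable {i : Fin 8} (hi : i ≠ 0) (w : Fin 4 → F)
include hi

lemma delta_apply_blockFst (m : Fin 4) (z : Fin 8 → F) :
    delta F i w z (blockFst i m) = -(w m * z (blockSnd i m)) := by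
  fin_cases i <;> first
    | exact absurd rfl hi
    | fin_cases m <;> simp [delta, blockFst, blockSnd, e, sh]

lemma delta_apply_blockSnd (m : Fin 4) (z : Fin 8 → F) :
    delta F i w z (blockSnd i m) = w m * z (blockFst i m) := by
  fin_cases i <;> first
    | exact absurd rfl hi
    | fin_cases m <;> simp [delta, blockFst, blockSnd, e, sh]

lemma delta_e_blockFst (m : Fin 4) :
    delta F i w (e F (blockFst i m)) = w m • e F (blockSnd i m) := by
  fin_cases i <;> first
    | exact absurd rfl hi
    | fin_cases m <;> simp [delta, blockFst, blockSnd, e, sh]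

lemma delta_injective_iff : Function.Injective (delta F i w) ↔ ∀ m, w m ≠ 0 := by
  constructor
  · intro hinj m hm
    have h := delta_e_blockFst hi w m
    rw [hm, zero_smul, ← show delta F i w 0 = 0 by simp [delta]] at h
    simpa [e] using hinj h
  · intro hw z z' hzz'
    funext p
    obtain ⟨m, hp | hp⟩ := exists_blockFst_eq_or_blockSnd_eq hi p <;> subst hp
    · simpa [delta_apply_blockSnd hi, hw m] using congrFun hzz' (blockSnd i m)
    · simpa [delta_apply_blockFst hi, hw m] using congrFun hzz' (blockFst i m)

end Delta

def twist : Fin 3 → (Fin 4 → F) → Fin 4 → F :=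
  ![id,
    fun v => ![(v 0 - v 1 - v 2 + v 3) / 2, (-v 0 + v 1 - v 2 + v 3) / 2,
      (-v 0 - v 1 + v 2 + v 3) / 2, (v 0 + v 1 + v 2 + v 3) / 2],
    fun v => ![(v 0 - v 1 - v 2 - v 3) / 2, (-v 0 + v 1 - v 2 - v 3) / 2,
      (-v 0 - v 1 + v 2 - v 3) / 2, (-v 0 - v 1 - v 2 + v 3) / 2]]

lemma twist_zero (k : Fin 3) : twist k (0 : Fin 4 → F) = 0 := by
  funext m
  fin_cases k <;> fin_cases m <;> simp [twist]

lemma twist_twist [NeZero (2 : F)] (k : Fin 3) (v : Fin 4 → F) : twist k (twist k v) = v := by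
  funext m
  fin_cases k <;> fin_cases m <;> simp [twist] <;> field_simp <;> ring

lemma rhoFam_apply (k : Fin 3) (x : Fin 8 → Fin 4 → F) (z : Fin 8 → F) :
    rhoFam F k x z = ∑ i : Fin 8, if i = 0 then 0 else delta F i (twist k (x i)) z := by
  fin_cases k <;> rfl

lemma rhoFam_single (k : Fin 3) {i : Fin 8} (hi : i ≠ 0) (v : Fin 4 → F) :
    rhoFam F k (single F i v) = delta F i (twist k v) := by
  funext z
  rw [rhoFam_apply, Finset.sum_eq_single i (fun j _ hj => by simp [single, hj, twist_zero, delta])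
    (by simp)]
  simp [single, hi]

lemma exists_rhoFam_eq_skewElem [NeZero (2 : F)] (k : Fin 3) {p q : Fin 8} (hpq : p ≠ q) :
    ∃ x ∈ VGx F, rhoFam F k x = skewElem p q := by
  obtain ⟨i, hi, m, h | h⟩ := exists_block_eq_of_ne hpq
  · refine ⟨single F i (twist k (Pi.single m 1)), single_mem_VGx hi _, ?_⟩
    rw [rhoFam_single k hi, twist_twist, delta_single, h.1, h.2, one_smul]
  · refine ⟨single F i (twist k (Pi.single m (-1))), single_mem_VGx hi _, ?_⟩
    rw [rhoFam_single k hi, twist_twist, delta_single, h.1, h.2, skewElem_swap]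
    simp

theorem rhoFam_irreducible [NeZero (2 : F)] (k : Fin 3) (U : Submodule F (Fin 8 → F))
    (hU : ∀ x ∈ VGx F, ∀ u ∈ U, rhoFam F k x u ∈ U) : U = ⊥ ∨ U = ⊤ :=
  eq_bot_or_eq_top_of_forall_skewElem_mem (by simp) U fun p q hpq z hz => by
    obtain ⟨x, hx, hxpq⟩ := exists_rhoFam_eq_skewElem (F := F) k hpq
    exact hxpq ▸ hU x hx z hz

lemma injective_rhoFam_single_iff (k : Fin 3) {i : Fin 8} (hi : i ≠ 0) (v : Fin 4 → F) :
    Function.Injective (rhoFam F k (single F i v)) ↔ ∀ m, twist k v m ≠ 0 := by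
  rw [rhoFam_single k hi, delta_injective_iff hi]

lemma exists_twist_separating [CharZero F] :
    ∀ {k l : Fin 3}, k ≠ l → ∃ v : Fin 4 → F, ¬((∀ m, twist k v m ≠ 0) ↔ (∀ m, twist l v m ≠ 0))
  | 0, 1, _ | 1, 0, _ | 1, 2, _ | 2, 1, _ =>
    ⟨![1, 1, 1, 1], by simp [twist, Fin.forall_fin_succ] <;> norm_num⟩
  | 0, 2, _ | 2, 0, _ => ⟨![-1, -1, -1, -3], by simp [twist, Fin.forall_fin_succ]; norm_num⟩
  | 0, 0, h | 1, 1, h | 2, 2, h => absurd rfl h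

theorem rho_irreducible_inequivalent_general [CharZero F] :
    (∀ k : Fin 3, ∀ U : Submodule F (Fin 8 → F),
      (∀ x ∈ VGx F, ∀ u ∈ U, rhoFam F k x u ∈ U) → U = ⊥ ∨ U = ⊤) ∧
    (∀ k l : Fin 3, k ≠ l →
      ¬ ∃ T : (Fin 8 → F) ≃ₗ[F] (Fin 8 → F),
          ∀ x ∈ VGx F, ∀ z : Fin 8 → F, T (rhoFam F k x z) = rhoFam F l x (T z)) := by
  refine ⟨rhoFam_irreducible, fun k l hkl ⟨T, hT⟩ => ?_⟩
  obtain ⟨v, hv⟩ := exists_twist_separating (F := F) hkl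
  apply hv
  rw [← injective_rhoFam_single_iff k one_ne_zero, ← injective_rhoFam_single_iff l one_ne_zero]
  exact Function.Semiconj.injective_iff T.toEquiv (hT _ (single_mem_VGx one_ne_zero v))

/-- **Statement 12.** (F algebraically closed of characteristic 0.)  The three
`F⁸`-modules over `V^σ[G^×]` given by `ρ₁, ρ₂, ρ₃` are irreducible (the only
submodules are `0` and `F⁸`) and pairwise non-equivalent. -/
theorem rho_irreducible_inequivalent [IsAlgClosed F] [CharZero F] :
    (∀ k : Fin 3, ∀ U : Submodule F (Fin 8 → F),
      (∀ x ∈ VGx F, ∀ u ∈ U, rhoFam F k x u ∈ U) → U = ⊥ ∨ U = ⊤) ∧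
    (∀ k l : Fin 3, k ≠ l →
      ¬ ∃ T : (Fin 8 → F) ≃ₗ[F] (Fin 8 → F),
          ∀ x ∈ VGx F, ∀ z : Fin 8 → F, T (rhoFam F k x z) = rhoFam F l x (T z)) :=
  rho_irreducible_inequivalent_general

end
end GGA
end
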